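/- arXiv:2310.17771 — 5 statements merged into one kernel-verified Lean document; each statement's English description precedes it below -/
import Mathlib

section
/- Let τ>0 and ν∈ℝ with ν≠1+τ. The polynomial ρ(η)=((1+τ)/(1+τ-ν))η² - ((1+τ+τν)/(1+τ-ν))η + τν/(1+τ-ν) has roots exactly 1 and τν/(1+τ), and both roots lie in the closed unit disk with the root 1 simple if and only if -(1+τ)/τ ≤ ν < (1+τ)/τ. -/
theorem zero_stability_variable_step (τ ν : ℝ) (hτ : 0 < τ) (hν : ν ≠ 1 + τ) :
    (∀ η : ℂ, (((1 + τ) : ℝ) / (1 + τ - ν) : ℝ) * η ^ 2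
        - (((1 + τ + τ * ν) / (1 + τ - ν) : ℝ) : ℂ) * η
        + ((τ * ν / (1 + τ - ν) : ℝ) : ℂ) = 0 ↔ (η = 1 ∨ η = ((τ * ν / (1 + τ) : ℝ) : ℂ))) ∧
    ((∀ η : ℂ, (((1 + τ) / (1 + τ - ν) : ℝ) : ℂ) * η ^ 2
        - (((1 + τ + τ * ν) / (1 + τ - ν) : ℝ) : ℂ) * η
        + ((τ * ν / (1 + τ - ν) : ℝ) : ℂ) = 0 →
        ‖η‖ ≤ 1 ∧ (η = 1 →
          deriv (fun z : ℂ => (((1 + τ) / (1 + τ - ν) : ℝ) : ℂ) * z ^ 2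
            - (((1 + τ + τ * ν) / (1 + τ - ν) : ℝ) : ℂ) * z
            + ((τ * ν / (1 + τ - ν) : ℝ) : ℂ)) η ≠ 0)) ↔
      (-(1 + τ) / τ ≤ ν ∧ ν < (1 + τ) / τ)) := by
  have h1τ : (0:ℝ) < 1 + τ := by linarith
  have h1τ' : (1 + τ : ℝ) ≠ 0 := ne_of_gt h1τ
  have hd : (1 + τ - ν : ℝ) ≠ 0 := sub_ne_zero.mpr (Ne.symm hν)
  have hdC : ((1 + τ - ν : ℝ) : ℂ) ≠ 0 := by exact_mod_cast hd
  have h1C : ((1 + τ : ℝ) : ℂ) ≠ 0 := by exact_mod_cast h1τ'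
  have h1C' : (1 + (τ:ℂ)) ≠ 0 := by exact_mod_cast h1τ'
  have hdC' : (1 + (τ:ℂ) - ν) ≠ 0 := by exact_mod_cast hd
  have ha : (((1 + τ) / (1 + τ - ν) : ℝ) : ℂ) ≠ 0 := by
    exact_mod_cast div_ne_zero h1τ' hd
  have key : ∀ η : ℂ, (((1 + τ) : ℝ) / (1 + τ - ν) : ℝ) * η ^ 2
        - (((1 + τ + τ * ν) / (1 + τ - ν) : ℝ) : ℂ) * η
        + ((τ * ν / (1 + τ - ν) : ℝ) : ℂ)
      = (((1 + τ) / (1 + τ - ν) : ℝ) : ℂ) * ((η - 1) * (η - ((τ * ν / (1 + τ) : ℝ) : ℂ))) := by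
    intro η
    push_cast
    field_simp [h1C', hdC']
    ring
  have hroots : ∀ η : ℂ, (((1 + τ) : ℝ) / (1 + τ - ν) : ℝ) * η ^ 2
        - (((1 + τ + τ * ν) / (1 + τ - ν) : ℝ) : ℂ) * η
        + ((τ * ν / (1 + τ - ν) : ℝ) : ℂ) = 0 ↔ (η = 1 ∨ η = ((τ * ν / (1 + τ) : ℝ) : ℂ)) := by
    intro η
    rw [key η, mul_eq_zero, mul_eq_zero, sub_eq_zero, sub_eq_zero]
    exact or_iff_right ha
  refine ⟨hroots, ?_⟩
  -- derivative
  have hderF : ∀ z : ℂ, HasDerivAt (fun z : ℂ => (((1 + τ) / (1 + τ - ν) : ℝ) : ℂ) * z ^ 2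
            - (((1 + τ + τ * ν) / (1 + τ - ν) : ℝ) : ℂ) * z
            + ((τ * ν / (1 + τ - ν) : ℝ) : ℂ))
        ((((1 + τ) / (1 + τ - ν) : ℝ) : ℂ) * (2 * z ^ 1)
          - (((1 + τ + τ * ν) / (1 + τ - ν) : ℝ) : ℂ) * 1) z := by
    intro z
    exact (((hasDerivAt_pow 2 z).const_mul _).sub
      ((hasDerivAt_id z).const_mul _)).add_const _
  have hder1 : deriv (fun z : ℂ => (((1 + τ) / (1 + τ - ν) : ℝ) : ℂ) * z ^ 2
            - (((1 + τ + τ * ν) / (1 + τ - ν) : ℝ) : ℂ) * z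
            + ((τ * ν / (1 + τ - ν) : ℝ) : ℂ)) 1
      = (((1 + τ - τ * ν) / (1 + τ - ν) : ℝ) : ℂ) := by
    rw [(hderF 1).deriv]
    push_cast
    field_simp [hdC']
    ring
  constructor
  · intro h
    have hr : ((τ * ν / (1 + τ) : ℝ) : ℂ) = 1 ∨ ((τ * ν / (1 + τ) : ℝ) : ℂ)
        = ((τ * ν / (1 + τ) : ℝ) : ℂ) := Or.inr rfl
    have h2 := h _ ((hroots _).mpr hr)
    have habs : |τ * ν / (1 + τ)| ≤ 1 := by
      have := h2.1
      rwa [Complex.norm_real, Real.norm_eq_abs] at this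
    rw [abs_le, div_le_one h1τ, le_div_iff₀ h1τ] at habs
    have h3 := (h 1 ((hroots 1).mpr (Or.inl rfl))).2 rfl
    rw [hder1] at h3
    have hne : τ * ν ≠ 1 + τ := by
      intro hc
      apply h3
      rw [show (1 + τ - τ * ν : ℝ) = 0 by linarith]
      simp
    constructor
    · rw [div_le_iff₀ hτ]; nlinarith [habs.1]
    · rw [lt_div_iff₀ hτ]
      rcases lt_or_eq_of_le habs.2 with h' | h'
      · linarith
      · exact absurd h' hne
  · rintro ⟨hl, hr⟩ η hη
    rw [div_le_iff₀ hτ] at hl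
    rw [lt_div_iff₀ hτ] at hr
    have hderne : deriv (fun z : ℂ => (((1 + τ) / (1 + τ - ν) : ℝ) : ℂ) * z ^ 2
            - (((1 + τ + τ * ν) / (1 + τ - ν) : ℝ) : ℂ) * z
            + ((τ * ν / (1 + τ - ν) : ℝ) : ℂ)) 1 ≠ 0 := by
      rw [hder1]
      have : (1 + τ - τ * ν : ℝ) ≠ 0 := by nlinarith
      exact_mod_cast div_ne_zero this hd
    rcases (hroots η).mp hη with rfl | rfl
    · refine ⟨by simp, fun _ => hderne⟩
    · constructor
      · rw [Complex.norm_real, Real.norm_eq_abs, abs_le]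
        constructor
        · rw [le_div_iff₀ h1τ]; nlinarith
        · rw [div_le_one h1τ]; nlinarith
      · intro h1
        rw [h1]
        exact hderne
end

section
/- Let θ∈[0,1], ν∈ℝ, ν≠2, A=2-ν-θ(2+ν), and φ∈ℝ with denominator D=[2θcos2φ+Acosφ+νθ]²+[2θsin2φ+Asinφ]²>0. Then the imaginary part of (2e^{2iφ}-(2+ν)e^{iφ}+ν)/(2θe^{2iφ}+Ae^{iφ}+θν) equals (2-ν)²sinφ/D. -/
theorem boundary_locus_imaginary_part (θ ν φ : ℝ) (hθ : θ ∈ Set.Icc (0:ℝ) 1) (hν : ν ≠ 2)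
    (A : ℝ) (hA : A = 2 - ν - θ * (2 + ν))
    (D : ℝ)
    (hD : D = (2 * θ * Real.cos (2 * φ) + A * Real.cos φ + ν * θ) ^ 2
            + (2 * θ * Real.sin (2 * φ) + A * Real.sin φ) ^ 2)
    (hDpos : 0 < D) :
    ((2 * Complex.exp (2 * φ * Complex.I) - (2 + (ν : ℂ)) * Complex.exp (φ * Complex.I) + ν) /
      (2 * θ * Complex.exp (2 * φ * Complex.I) + (A : ℂ) * Complex.exp (φ * Complex.I)
        + (θ : ℂ) * ν)).im
      = (2 - ν) ^ 2 * Real.sin φ / D := by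
  have e1 : Complex.exp (φ * Complex.I)
      = ⟨Real.cos φ, Real.sin φ⟩ := by
    rw [show (φ : ℂ) * Complex.I = (φ : ℝ) * Complex.I by norm_num,
      Complex.exp_mul_I]
    simp [Complex.ext_iff, Complex.cos_ofReal_re, Complex.sin_ofReal_re, ← Complex.ofReal_ofNat, ← Complex.ofReal_mul, Complex.cos_ofReal_im, Complex.sin_ofReal_im]
  have e2 : Complex.exp (2 * φ * Complex.I)
      = ⟨Real.cos (2 * φ), Real.sin (2 * φ)⟩ := by
    rw [show (2 : ℂ) * φ * Complex.I = ((2 * φ : ℝ) : ℂ) * Complex.I by push_cast; ring,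
      Complex.exp_mul_I]
    simp [Complex.ext_iff, Complex.cos_ofReal_re, Complex.sin_ofReal_re, ← Complex.ofReal_ofNat, ← Complex.ofReal_mul, Complex.cos_ofReal_im, Complex.sin_ofReal_im]
  rw [Complex.div_im, e1, e2]
  have hnsq : Complex.normSq (2 * θ * (⟨Real.cos (2*φ), Real.sin (2*φ)⟩ : ℂ)
      + (A : ℂ) * (⟨Real.cos φ, Real.sin φ⟩ : ℂ) + (θ : ℂ) * ν) = D := by
    simp [Complex.normSq_apply, Complex.ext_iff, hD]
    ring
  rw [hnsq]
  simp only [Complex.add_im, Complex.add_re, Complex.sub_im, Complex.sub_re,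
    Complex.mul_im, Complex.mul_re, Complex.ofReal_re, Complex.ofReal_im,
    Complex.re_ofNat, Complex.im_ofNat]
  rw [Real.cos_two_mul, Real.sin_two_mul]
  rw [div_sub_div_same, div_eq_div_iff (by positivity) (by positivity)]
  subst hA
  ring
end

section
/- Let θ∈[0,1], ν∈ℝ, ν≠2, A=2-ν-θ(2+ν), and φ∈ℝ with D=[2θcos2φ+Acosφ+νθ]²+[2θsin2φ+Asinφ]²>0. Then the real part of (2e^{2iφ}-(2+ν)e^{iφ}+ν)/(2θe^{2iφ}+Ae^{iφ}+θν) equals (4(2θ-1)+ν²(2θ+1)-8νθcosφ)(1-cosφ)/D. -/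
/-!
The numerator factors as `ρ(ζ) = (ζ - 1)(2ζ - ν)` and the denominator is `σ(ζ) = θ ρ(ζ) + (2 - ν) ζ`.
Hence `Re (ρ σ̄) = θ |ρ|² + (2 - ν) Re (ρ ζ̄)`, and on the unit circle both terms are explicit in
`cos φ`: `|ρ|² = 2(1 - cos φ)(4 - 4ν cos φ + ν²)` and `Re (ρ ζ̄) = -(2 + ν)(1 - cos φ)`.
The denominator `D` is `|σ(e^{iφ})|²`.
-/

open Complex ComplexConjugate

namespace Complex

theorem re_div_eq_re_mul_conj_div (z w : ℂ) :
    (z / w).re = (z * conj w).re / normSq w := by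
  rw [div_eq_mul_inv, inv_def, ← mul_assoc, re_mul_ofReal, div_eq_mul_inv]

theorem normSq_ofReal_mul_sub_ofReal (b a : ℝ) (z : ℂ) :
    normSq (b * z - a) = b ^ 2 * normSq z - 2 * a * b * z.re + a ^ 2 := by
  simp only [normSq_apply, sub_re, sub_im, mul_re, mul_im, ofReal_re, ofReal_im]
  ring

end Complex

namespace ThetaMethod

def rho (ν : ℝ) (z : ℂ) : ℂ := 2 * z ^ 2 - (2 + ν) * z + ν

def sigma (θ ν : ℝ) (z : ℂ) : ℂ := 2 * θ * z ^ 2 + (2 - ν - θ * (2 + ν)) * z + θ * ν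

theorem rho_eq_mul (ν : ℝ) (z : ℂ) : rho ν z = (z - 1) * (2 * z - ν) := by
  unfold rho; ring

theorem sigma_eq_rho (θ ν : ℝ) (z : ℂ) : sigma θ ν z = θ * rho ν z + (2 - ν) * z := by
  unfold sigma rho; ring

variable {z : ℂ}

theorem normSq_rho (hz : normSq z = 1) (ν : ℝ) :
    normSq (rho ν z) = 2 * (1 - z.re) * (4 - 4 * ν * z.re + ν ^ 2) := by
  have h1 := normSq_ofReal_mul_sub_ofReal 1 1 z
  have h2 := normSq_ofReal_mul_sub_ofReal 2 ν z
  rw [ofReal_one, one_mul] at h1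
  rw [ofReal_ofNat] at h2
  rw [rho_eq_mul, map_mul, h1, h2, hz]
  ring

theorem re_rho_mul_conj (hz : normSq z = 1) (ν : ℝ) :
    (rho ν z * conj z).re = -(2 + ν) * (1 - z.re) := by
  have hzz : z * conj z = 1 := by rw [mul_conj, hz, ofReal_one]
  have hexpand : rho ν z * conj z = 2 * z - (2 + ν) + ν * conj z := by
    unfold rho; linear_combination (2 * z - (2 + ν)) * hzz
  rw [hexpand]
  simp only [add_re, sub_re, mul_re, conj_re, conj_im, ofReal_re, ofReal_im, re_ofNat, im_ofNat]
  ring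

theorem re_rho_mul_conj_sigma (hz : normSq z = 1) (θ ν : ℝ) :
    (rho ν z * conj (sigma θ ν z)).re
      = (4 * (2 * θ - 1) + ν ^ 2 * (2 * θ + 1) - 8 * ν * θ * z.re) * (1 - z.re) := by
  have hsplit : rho ν z * conj (sigma θ ν z)
      = θ * normSq (rho ν z) + (2 - ν : ℝ) * (rho ν z * conj z) := by
    rw [sigma_eq_rho, map_add, map_mul, map_mul, map_sub, conj_ofReal, conj_ofReal, map_ofNat,
      ← mul_conj]
    push_cast
    ring
  rw [hsplit, add_re, re_ofReal_mul, re_ofReal_mul, ofReal_re, re_rho_mul_conj hz, normSq_rho hz]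
  ring

theorem re_rho_div_sigma (hz : normSq z = 1) (θ ν : ℝ) :
    (rho ν z / sigma θ ν z).re
      = (4 * (2 * θ - 1) + ν ^ 2 * (2 * θ + 1) - 8 * ν * θ * z.re) * (1 - z.re)
        / normSq (sigma θ ν z) := by
  rw [re_div_eq_re_mul_conj_div, re_rho_mul_conj_sigma hz]

end ThetaMethod

open ThetaMethod

theorem boundary_locus_real_part_general (θ ν φ : ℝ)
    (A : ℝ) (hA : A = 2 - ν - θ * (2 + ν))
    (D : ℝ)
    (hD : D = (2 * θ * Real.cos (2 * φ) + A * Real.cos φ + ν * θ) ^ 2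
            + (2 * θ * Real.sin (2 * φ) + A * Real.sin φ) ^ 2) :
    ((2 * Complex.exp (2 * φ * Complex.I) - (2 + (ν : ℂ)) * Complex.exp (φ * Complex.I) + ν) /
      (2 * θ * Complex.exp (2 * φ * Complex.I) + (A : ℂ) * Complex.exp (φ * Complex.I)
        + (θ : ℂ) * ν)).re
      = (4 * (2 * θ - 1) + ν ^ 2 * (2 * θ + 1) - 8 * ν * θ * Real.cos φ) * (1 - Real.cos φ) / D
      := by
  have hexp2 : exp (2 * φ * I) = exp ((2 * φ : ℝ) * I) := by push_cast; ring_nf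
  have hsq : exp (2 * φ * I) = exp (φ * I) ^ 2 := by rw [← exp_nat_mul]; ring_nf
  have hunit : normSq (exp (φ * I)) = 1 := by
    rw [normSq_eq_norm_sq, norm_exp_ofReal_mul_I, one_pow]
  have hσ : normSq (sigma θ ν (exp (φ * I))) = D := by
    rw [hD, hA, normSq_apply, ← sq, ← sq, sigma, ← hsq, hexp2]
    simp only [add_re, add_im, sub_re, sub_im, mul_re, mul_im,
      exp_ofReal_mul_I_re, exp_ofReal_mul_I_im, ofReal_re, ofReal_im, re_ofNat, im_ofNat]
    ring
  have hquot : (2 * exp (2 * φ * I) - (2 + (ν : ℂ)) * exp (φ * I) + ν) /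
      (2 * θ * exp (2 * φ * I) + (A : ℂ) * exp (φ * I) + (θ : ℂ) * ν)
      = rho ν (exp (φ * I)) / sigma θ ν (exp (φ * I)) := by
    rw [rho, sigma, hsq, hA]; push_cast; ring
  rw [hquot, re_rho_div_sigma hunit, hσ, exp_ofReal_mul_I_re]

theorem boundary_locus_real_part (θ ν φ : ℝ) (hθ : θ ∈ Set.Icc (0:ℝ) 1) (hν : ν ≠ 2)
    (A : ℝ) (hA : A = 2 - ν - θ * (2 + ν))
    (D : ℝ)
    (hD : D = (2 * θ * Real.cos (2 * φ) + A * Real.cos φ + ν * θ) ^ 2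
            + (2 * θ * Real.sin (2 * φ) + A * Real.sin φ) ^ 2)
    (hDpos : 0 < D) :
    ((2 * Complex.exp (2 * φ * Complex.I) - (2 + (ν : ℂ)) * Complex.exp (φ * Complex.I) + ν) /
      (2 * θ * Complex.exp (2 * φ * Complex.I) + (A : ℂ) * Complex.exp (φ * Complex.I)
        + (θ : ℂ) * ν)).re
      = (4 * (2 * θ - 1) + ν ^ 2 * (2 * θ + 1) - 8 * ν * θ * Real.cos φ) * (1 - Real.cos φ) / D :=
  boundary_locus_real_part_general θ ν φ A hA D hD
end

section
/- For τ>0 and θ≥1/2, if τ>1 then τ(1+τ)(2θ-1)/(2θτ+1) > (2θ-1)(1+τ)/((2θ+1)τ) whenever θ>1/2; consequently the second-order choice ν=τ(1+τ)(2θ-1)/(2θτ+1) violates the A-stability upper bound ν≤(2θ-1)(1+τ)/((2θ+1)τ) for increasing timesteps. -/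
theorem increasing_timestep_incompatibility (τ θ : ℝ) (hτ : 0 < τ) (hθ : θ ≥ 1 / 2) :
    (1 < τ → 1 / 2 < θ →
      τ * (1 + τ) * (2 * θ - 1) / (2 * θ * τ + 1)
        > (2 * θ - 1) * (1 + τ) / ((2 * θ + 1) * τ)) ∧
    (1 < τ → 1 / 2 < θ →
      ¬ (τ * (1 + τ) * (2 * θ - 1) / (2 * θ * τ + 1)
          ≤ (2 * θ - 1) * (1 + τ) / ((2 * θ + 1) * τ))) := by
  have key : 1 < τ → 1 / 2 < θ →
      τ * (1 + τ) * (2 * θ - 1) / (2 * θ * τ + 1)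
        > (2 * θ - 1) * (1 + τ) / ((2 * θ + 1) * τ) := by
    intro h1 h2
    have hd1 : 0 < 2 * θ * τ + 1 := by nlinarith
    have hd2 : 0 < (2 * θ + 1) * τ := by nlinarith
    rw [gt_iff_lt, div_lt_div_iff₀ hd2 hd1]
    nlinarith [mul_pos (mul_pos (sub_pos.mpr h2) (by linarith : (0:ℝ) < 1 + τ)) (by nlinarith : (0:ℝ) < τ * τ * (2 * θ + 1) - (2 * θ * τ + 1))]
  exact ⟨key, fun h1 h2 => not_le.mpr (key h1 h2)⟩
end

section
/- For τ>0 and ν,θ real with 1+τ-ν>0 and ν=τ(1+τ)(2θ-1)/(2θτ+1) and θ∈[0,1], the two third-order LTE coefficients C₁ = -τ(ν(2+3τ)+τ²(τ+1))/(12(1+τ-ν)) and C₂ = -ντ(ν+τ+τ²)(τ+1)/(4(1+τ-ν)²) cannot both vanish; i.e., there is no choice of ν making the method third order. -/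
theorem no_third_order_variable_step (τ θ ν : ℝ) (hτ : 0 < τ)
    (hden : 0 < 1 + τ - ν) (hθ : θ ∈ Set.Icc (0:ℝ) 1)
    (hν : ν = τ * (1 + τ) * (2 * θ - 1) / (2 * θ * τ + 1)) :
    ¬ (-(τ * (ν * (2 + 3 * τ) + τ ^ 2 * (τ + 1))) / (12 * (1 + τ - ν)) = 0 ∧
       -(ν * τ * (ν + τ + τ ^ 2) * (τ + 1)) / (4 * (1 + τ - ν) ^ 2) = 0) := by
  rintro ⟨h1, h2⟩
  have hd1 : (12 * (1 + τ - ν)) ≠ 0 := by positivity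
  have hd2 : (4 * (1 + τ - ν) ^ 2) ≠ 0 := by positivity
  have e1 : τ * (ν * (2 + 3 * τ) + τ ^ 2 * (τ + 1)) = 0 := by
    have := (div_eq_zero_iff.mp h1).resolve_right hd1
    linarith [this]
  have e2 : ν * τ * (ν + τ + τ ^ 2) * (τ + 1) = 0 := by
    have := (div_eq_zero_iff.mp h2).resolve_right hd2
    linarith [this]
  have e1' : ν * (2 + 3 * τ) + τ ^ 2 * (τ + 1) = 0 := by
    rcases mul_eq_zero.mp e1 with h | h
    · linarith
    · exact h
  -- ν ≠ 0, since otherwise τ²(τ+1)=0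
  have hν0 : ν ≠ 0 := by
    intro h; rw [h] at e1'; nlinarith
  have hτ1 : τ + 1 ≠ 0 := by linarith
  have e2' : ν + τ + τ ^ 2 = 0 := by
    have h := mul_eq_zero.mp e2
    rcases h with h | h
    · rcases mul_eq_zero.mp h with h | h
      · rcases mul_eq_zero.mp h with h | h
        · exact absurd h hν0
        · exact absurd h (ne_of_gt hτ)
      · exact h
    · exact absurd h hτ1
  -- substitute ν = -(τ+τ²) into e1'
  nlinarith [sq_nonneg τ, sq_nonneg (τ + 1)]
end
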